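/- arXiv:math/0407321 — 4 statements merged into one kernel-verified Lean document; each statement's English description precedes it below -/
import Mathlib

section
/- In the monoid presented by generators a_i, b_i, c_i, d_i (i ∈ Z/3) subject to the relations d_0 d_1 d_2 = 1, b_i d_i = d_i b_i = 1, and a_i = a_{i+1} d_{i-1}, b_i = a_{i-1} c_{i+1}, c_i = b_{i-1} c_{i+1}, d_i = a_{i+1} c_{i-1} (for all i ∈ Z/3), the equivalences b_i = d_{i+1} d_{i-1} and d_i = b_{i-1} b_{i+1} hold for all i ∈ Z/3. -/
/-- The 12-letter alphabet `{a_i, b_i, c_i, d_i : i ∈ ℤ/3}`. -/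
inductive Letter : Type
  | a (i : ZMod 3)
  | b (i : ZMod 3)
  | c (i : ZMod 3)
  | d (i : ZMod 3)

/-- A single letter as an element of the free monoid. -/
def g (x : Letter) : FreeMonoid Letter := FreeMonoid.of x

/-- The defining relations (1)–(3). -/
inductive rel : FreeMonoid Letter → FreeMonoid Letter → Prop
  | r1 : rel (g (.d 0) * g (.d 1) * g (.d 2)) 1
  | r2a (i : ZMod 3) : rel (g (.b i) * g (.d i)) 1
  | r2b (i : ZMod 3) : rel (g (.d i) * g (.b i)) 1
  | r3a (i : ZMod 3) : rel (g (.a i)) (g (.a (i + 1)) * g (.d (i - 1)))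
  | r3b (i : ZMod 3) : rel (g (.b i)) (g (.a (i - 1)) * g (.c (i + 1)))
  | r3c (i : ZMod 3) : rel (g (.c i)) (g (.b (i - 1)) * g (.c (i + 1)))
  | r3d (i : ZMod 3) : rel (g (.d i)) (g (.a (i + 1)) * g (.c (i - 1)))

noncomputable def D (i : ZMod 3) : (conGen rel).Quotient := (conGen rel).mk' (g (.d i))
noncomputable def B (i : ZMod 3) : (conGen rel).Quotient := (conGen rel).mk' (g (.b i))

lemma rel_mk {x y : FreeMonoid Letter} (h : rel x y) :
    (conGen rel).mk' x = (conGen rel).mk' y :=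
  (Con.eq _).mpr (ConGen.Rel.of _ _ h)

lemma hBD (i : ZMod 3) : B i * D i = 1 := by
  have := rel_mk (rel.r2a i)
  simpa [B, D, map_mul] using this

lemma hDB (i : ZMod 3) : D i * B i = 1 := by
  have := rel_mk (rel.r2b i)
  simpa [B, D, map_mul] using this

lemma h012 : D 0 * D 1 * D 2 = 1 := by
  have := rel_mk rel.r1
  simpa [B, D, map_mul] using this

lemma key {x y z : ZMod 3} (h : D x * D y * D z = 1) :
    B x = D y * D z ∧ D y * D z * D x = 1 := by
  have hb : B x = D y * D z := by
    calc B x = B x * (D x * D y * D z) := by rw [h, mul_one]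
    _ = (B x * D x) * (D y * D z) := by simp [mul_assoc]
    _ = D y * D z := by rw [hBD, one_mul]
  exact ⟨hb, by rw [← hb]; exact hBD x⟩

lemma key2 {x y z : ZMod 3} (h : D y * D z * D x = 1) :
    D x = B z * B y := by
  symm
  calc B z * B y = B z * B y * (D y * D z * D x) := by rw [h, mul_one]
  _ = B z * ((B y * D y) * (D z * D x)) := by simp [mul_assoc]
  _ = B z * (D z * D x) := by rw [hBD, one_mul]
  _ = (B z * D z) * D x := by rw [mul_assoc]
  _ = D x := by rw [hBD, one_mul]

lemma facts0 : B 0 = D 1 * D 2 ∧ D 1 * D 2 * D 0 = 1 := key h012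
lemma facts1 : B 1 = D 2 * D 0 ∧ D 2 * D 0 * D 1 = 1 := key facts0.2
lemma facts2 : B 2 = D 0 * D 1 ∧ D 0 * D 1 * D 2 = 1 := key facts1.2

/-- In the presented monoid, `b_i = d_{i+1} d_{i-1}` and `d_i = b_{i-1} b_{i+1}`. -/
theorem equivalences_25_26 (i : ZMod 3) :
    (conGen rel).mk' (g (.b i)) = (conGen rel).mk' (g (.d (i + 1)) * g (.d (i - 1))) ∧
    (conGen rel).mk' (g (.d i)) = (conGen rel).mk' (g (.b (i - 1)) * g (.b (i + 1))) := by
  have hb : ∀ i : ZMod 3, B i = D (i + 1) * D (i - 1) := by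
    intro j
    fin_cases j
    · exact facts0.1
    · exact facts1.1
    · exact facts2.1
  have hd : ∀ i : ZMod 3, D i = B (i - 1) * B (i + 1) := by
    intro j
    fin_cases j
    · exact key2 facts0.2
    · exact key2 facts1.2
    · exact key2 facts2.2
  constructor
  · simpa [B, D, map_mul] using hb i
  · simpa [B, D, map_mul] using hd i
end

section
/- The group presented by generators ã_i, b̃_i, c̃_i, d̃_i (i ∈ Z/3) and relations d̃_0 d̃_1 d̃_2 = 1, b̃_i d̃_i = d̃_i b̃_i = 1, ã_i = ã_{i+1} d̃_{i-1}, b̃_i = ã_{i-1} c̃_{i+1}, c̃_i = b̃_{i-1} c̃_{i+1}, d̃_i = ã_{i+1} c̃_{i-1}, together with the relations (d̃_i c̃_i) w = w (d̃_i c̃_i) for w ∈ {c̃_{i+1}, b̃_i d̃_{i+1} d̃_i} and u v = v u for u ∈ {ã_i b̃_i, b̃_{i-1} d̃_i d̃_{i-1} b̃_i}, v ∈ {ã_{i+1}, b̃_{i+1}, c̃_{i+1}, b̃_i d̃_{i+1} d̃_i}, is isomorphic to the free abelian group Z^3, with the images of ã_0, ã_1, ã_2 forming a free basis, and with b̃_i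 = ã_{i-1} ã_{i+1}^{-1}, c̃_i = ã_i^{-1}, d̃_i = ã_{i+1} ã_{i-1}^{-1}. -/
/-- A generator as an element of the free group. -/
def f (x : Letter) : FreeGroup Letter := FreeGroup.of x

/-- The relators corresponding to the defining relations (1)-(3), (7), (8)
of the Dynnikov semigroup, written as words `lhs * rhs⁻¹`. -/
inductive isRel : FreeGroup Letter → Prop
  | r1 : isRel (f (.d 0) * f (.d 1) * f (.d 2))
  | r2a (i : ZMod 3) : isRel (f (.b i) * f (.d i))
  | r2b (i : ZMod 3) : isRel (f (.d i) * f (.b i))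
  | r3a (i : ZMod 3) : isRel (f (.a i) * (f (.a (i + 1)) * f (.d (i - 1)))⁻¹)
  | r3b (i : ZMod 3) : isRel (f (.b i) * (f (.a (i - 1)) * f (.c (i + 1)))⁻¹)
  | r3c (i : ZMod 3) : isRel (f (.c i) * (f (.b (i - 1)) * f (.c (i + 1)))⁻¹)
  | r3d (i : ZMod 3) : isRel (f (.d i) * (f (.a (i + 1)) * f (.c (i - 1)))⁻¹)
  | r7 (i : ZMod 3) (w : FreeGroup Letter)
      (hw : w = f (.c (i + 1)) ∨ w = f (.b i) * f (.d (i + 1)) * f (.d i)) :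
      isRel (f (.d i) * f (.c i) * w * (w * (f (.d i) * f (.c i)))⁻¹)
  | r8 (i : ZMod 3) (u v : FreeGroup Letter)
      (hu : u = f (.a i) * f (.b i) ∨
            u = f (.b (i - 1)) * f (.d i) * f (.d (i - 1)) * f (.b i))
      (hv : v = f (.a (i + 1)) ∨ v = f (.b (i + 1)) ∨ v = f (.c (i + 1)) ∨
            v = f (.b i) * f (.d (i + 1)) * f (.d i)) :
      isRel (u * v * (v * u)⁻¹)

/-- The relator set. -/
def rels : Set (FreeGroup Letter) := {w | isRel w}

/-- The group associated with the Dynnikov semigroup `DS = RSG_2`. -/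
abbrev DSGroup : Type := PresentedGroup rels

/-!
Relations (1)–(3) alone already make the `ã_i` commute. Solving (3) for the other letters gives
`c̃_i = ã_{i-1}⁻¹ ã_i⁻¹ ã_{i-1}`, `d̃_i = ã_{i-1}⁻¹ ã_{i+1}` and `b̃_i = d̃_i⁻¹`; substituted back
into (3), this says that `ã_{i+1}` commutes with `ã_{i-1} ã_i⁻¹` and `ã_i` with
`ã_{i-1} ã_i⁻¹ ã_{i+1}`, and then (1) forces `ã_0 ã_1 = ã_1 ã_0`, whence all `ã_i` commute.
Conversely, the formulas of the theorem satisfy every relation in the abelian group `ℤ³`, so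
`ã_i ↦ e_i` is a homomorphism, inverse to `v ↦ ∏ ã_i ^ v_i`.
-/

theorem zmod3_sub_one_sub_one (j : ZMod 3) : j - 1 - 1 = j + 1 := by
  revert j; decide

theorem zmod3_add_one_add_one (j : ZMod 3) : j + 1 + 1 = j - 1 := by
  revert j; decide

/-- `y z⁻¹ x` commutes with `x` and `z`, hence with `y`; writing `x = z y⁻¹ (y z⁻¹ x)` in the
equation and cancelling this element leaves `z y⁻¹ = y⁻¹ z`. -/
theorem commute_of_commute_mul_inv_of_eq {G : Type*} [Group G] {x y z : G}
    (hx : Commute x (y * z⁻¹)) (hz : Commute z (y * z⁻¹ * x))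
    (h : z * y⁻¹ * x = x * y⁻¹ * z) : Commute y z := by
  have hYx : Commute (y * z⁻¹ * x) x := (hx.mul_right (Commute.refl x)).symm
  have hYy : Commute (y * z⁻¹ * x) y := by
    simpa using ((Commute.refl _).mul_right hYx.inv_right).mul_right hz.symm
  have hYyz : Commute (y * z⁻¹ * x) (y⁻¹ * z) := hYy.inv_right.mul_right hz.symm
  refine Commute.inv_left_iff.mp (mul_right_cancel (b := y * z⁻¹ * x) ?_)
  calc y⁻¹ * z * (y * z⁻¹ * x) = y * z⁻¹ * (x * y⁻¹ * z) := by rw [← hYyz.eq]; group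
    _ = y * z⁻¹ * (z * y⁻¹ * x) := by rw [h]
    _ = z * y⁻¹ * (y * z⁻¹ * x) := by group

structure DSRelations {G : Type*} [Group G] (A B C D : ZMod 3 → G) : Prop where
  d_mul_d_mul_d : D 0 * D 1 * D 2 = 1
  b_mul_d (i : ZMod 3) : B i * D i = 1
  a_eq (i : ZMod 3) : A i = A (i + 1) * D (i - 1)
  b_eq (i : ZMod 3) : B i = A (i - 1) * C (i + 1)
  c_eq (i : ZMod 3) : C i = B (i - 1) * C (i + 1)
  d_eq (i : ZMod 3) : D i = A (i + 1) * C (i - 1)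

namespace DSRelations

variable {G : Type*} [Group G] {A B C D : ZMod 3 → G} (h : DSRelations A B C D)
include h

theorem c_eq_inv_mul_inv_mul (i : ZMod 3) : C i = (A (i - 1))⁻¹ * (A i)⁻¹ * A (i - 1) := by
  have e := h.a_eq (i - 1)
  rw [sub_add_cancel, zmod3_sub_one_sub_one, h.d_eq, zmod3_add_one_add_one,
    add_sub_cancel_right, ← mul_assoc] at e
  rw [eq_inv_mul_of_mul_eq e.symm, mul_inv_rev]

theorem d_eq_inv_mul (i : ZMod 3) : D i = (A (i - 1))⁻¹ * A (i + 1) := by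
  rw [h.d_eq, h.c_eq_inv_mul_inv_mul, zmod3_sub_one_sub_one]
  group

theorem b_eq_inv_mul (i : ZMod 3) : B i = (A (i + 1))⁻¹ * A (i - 1) := by
  rw [eq_inv_of_mul_eq_one_left (h.b_mul_d i), h.d_eq_inv_mul, mul_inv_rev, inv_inv]

theorem commute_a_add_one_a_sub_one_mul_inv (i : ZMod 3) :
    Commute (A (i + 1)) (A (i - 1) * (A i)⁻¹) := by
  have e := h.b_eq i
  rw [h.b_eq_inv_mul, h.c_eq_inv_mul_inv_mul, add_sub_cancel_right] at e
  refine Commute.inv_left_iff.mp ?_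
  change (A (i + 1))⁻¹ * (A (i - 1) * (A i)⁻¹) = A (i - 1) * (A i)⁻¹ * (A (i + 1))⁻¹
  rw [← mul_assoc, e]
  group

theorem commute_a_a_sub_one_mul_inv_mul (i : ZMod 3) :
    Commute (A i) (A (i - 1) * (A i)⁻¹ * A (i + 1)) := by
  have e := h.c_eq i
  simp only [h.c_eq_inv_mul_inv_mul, h.b_eq_inv_mul, sub_add_cancel, zmod3_sub_one_sub_one,
    add_sub_cancel_right] at e
  refine Commute.inv_left_iff.mp ?_
  calc (A i)⁻¹ * (A (i - 1) * (A i)⁻¹ * A (i + 1))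
      = A (i - 1) * ((A (i - 1))⁻¹ * (A i)⁻¹ * A (i - 1)) * ((A i)⁻¹ * A (i + 1)) := by group
    _ = A (i - 1) * ((A i)⁻¹ * A (i + 1) * ((A i)⁻¹ * (A (i + 1))⁻¹ * A i))
          * ((A i)⁻¹ * A (i + 1)) := by rw [e]
    _ = A (i - 1) * (A i)⁻¹ * A (i + 1) * (A i)⁻¹ := by group

theorem commute_a_zero_a_one : Commute (A 0) (A 1) := by
  have hq : Commute (A 2) (A 0 * (A 1)⁻¹) := h.commute_a_add_one_a_sub_one_mul_inv 1
  have hs : Commute (A 1) (A 0 * (A 1)⁻¹ * A 2) := h.commute_a_a_sub_one_mul_inv_mul 1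
  have e : (A 2)⁻¹ * A 1 * ((A 0)⁻¹ * A 2) * ((A 1)⁻¹ * A 0) = 1 := by
    have e := h.d_mul_d_mul_d
    simp only [h.d_eq_inv_mul] at e
    exact e
  refine commute_of_commute_mul_inv_of_eq hq hs (mul_inv_eq_one.mp ?_)
  calc A 1 * (A 0)⁻¹ * A 2 * (A 2 * (A 0)⁻¹ * A 1)⁻¹
      = A 2 * ((A 2)⁻¹ * A 1 * ((A 0)⁻¹ * A 2) * ((A 1)⁻¹ * A 0)) * (A 2)⁻¹ := by group
    _ = 1 := by rw [e]; group

theorem commute_a_a (i j : ZMod 3) : Commute (A i) (A j) := by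
  have h01 := h.commute_a_zero_a_one
  have h12 : Commute (A 1) (A 2) := by
    have hq : Commute (A 1) (A 2 * (A 0)⁻¹) := h.commute_a_add_one_a_sub_one_mul_inv 0
    simpa using hq.mul_right h01.symm
  have h02 : Commute (A 0) (A 2) := by
    have hq : Commute (A 0) (A 1 * (A 2)⁻¹) := h.commute_a_add_one_a_sub_one_mul_inv 2
    simpa using h01.inv_right.mul_right hq
  fin_cases i <;> fin_cases j
  exacts [.refl _, h01, h02, h01.symm, .refl _, h12, h02.symm, h12.symm, .refl _]

theorem c_eq_inv (i : ZMod 3) : C i = (A i)⁻¹ := by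
  rw [h.c_eq_inv_mul_inv_mul, ((h.commute_a_a _ _).inv_inv).eq, inv_mul_cancel_right]

theorem b_eq_mul_inv (i : ZMod 3) : B i = A (i - 1) * (A (i + 1))⁻¹ :=
  (h.b_eq_inv_mul i).trans (h.commute_a_a _ _).inv_left.eq

theorem d_eq_mul_inv (i : ZMod 3) : D i = A (i + 1) * (A (i - 1))⁻¹ :=
  (h.d_eq_inv_mul i).trans (h.commute_a_a _ _).inv_left.eq

end DSRelations

section LetterImage

variable {H : Type*} [AddCommGroup H]

def letterImage (α : ZMod 3 → H) : Letter → Multiplicative H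
  | .a i => .ofAdd (α i)
  | .b i => .ofAdd (α (i - 1) - α (i + 1))
  | .c i => .ofAdd (-α i)
  | .d i => .ofAdd (α (i + 1) - α (i - 1))

theorem lift_letterImage_eq_one (α : ZMod 3 → H) :
    ∀ r ∈ rels, FreeGroup.lift (letterImage α) r = 1 := by
  intro r hr
  induction hr with
  | r1 =>
    simp only [f, map_mul, FreeGroup.lift_apply_of, letterImage, ← ofAdd_add, ofAdd_eq_one,
      show (0 : ZMod 3) - 1 = 2 from rfl, show (2 : ZMod 3) + 1 = 0 from rfl,
      show (2 : ZMod 3) - 1 = 1 from rfl, show (1 : ZMod 3) - 1 = 0 from rfl,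
      show (1 : ZMod 3) + 1 = 2 from rfl, zero_add]
    abel
  | r7 | r8 =>
    simp only [map_mul, map_inv]
    exact mul_inv_eq_one.mpr (mul_comm _ _)
  | _ =>
    simp only [f, map_mul, map_inv, FreeGroup.lift_apply_of, letterImage, ← ofAdd_add,
      ← ofAdd_neg, ofAdd_eq_one, sub_add_cancel, zmod3_sub_one_sub_one]
    abel

end LetterImage

namespace DSGroup

open PresentedGroup

theorem dsRelations_of :
    DSRelations (G := DSGroup) (fun i => of (.a i)) (fun i => of (.b i))
      (fun i => of (.c i)) (fun i => of (.d i)) where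
  d_mul_d_mul_d := one_of_mem isRel.r1
  b_mul_d i := one_of_mem (isRel.r2a i)
  a_eq i := mk_eq_mk_of_mul_inv_mem (isRel.r3a i)
  b_eq i := mk_eq_mk_of_mul_inv_mem (isRel.r3b i)
  c_eq i := mk_eq_mk_of_mul_inv_mem (isRel.r3c i)
  d_eq i := mk_eq_mk_of_mul_inv_mem (isRel.r3d i)

theorem of_b (i : ZMod 3) : (of (.b i) : DSGroup) = of (.a (i - 1)) * (of (.a (i + 1)))⁻¹ :=
  dsRelations_of.b_eq_mul_inv i

theorem of_c (i : ZMod 3) : (of (.c i) : DSGroup) = (of (.a i))⁻¹ :=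
  dsRelations_of.c_eq_inv i

theorem of_d (i : ZMod 3) : (of (.d i) : DSGroup) = of (.a (i + 1)) * (of (.a (i - 1)))⁻¹ :=
  dsRelations_of.d_eq_mul_inv i

noncomputable def toPi : DSGroup →* (ZMod 3 → Multiplicative ℤ) :=
  (MulEquiv.funMultiplicative (ZMod 3) ℤ).toMonoidHom.comp
    (toGroup (lift_letterImage_eq_one fun i => Pi.single i 1))

theorem toPi_of_a (i : ZMod 3) : toPi (of (.a i)) = Pi.mulSingle i (.ofAdd 1) := by
  funext j
  rw [toPi, MonoidHom.comp_apply, toGroup.of]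
  exact (Pi.mulSingle_multiplicativeOfAdd_eq (M := fun _ => ℤ) i 1 j).symm

noncomputable def ofPi : (ZMod 3 → Multiplicative ℤ) →* DSGroup :=
  MonoidHom.noncommPiCoprod (fun i => zpowersHom DSGroup (of (.a i))) (by
    intro i j _ _ _
    simpa only [zpowersHom_apply] using (dsRelations_of.commute_a_a i j).zpow_zpow _ _)

theorem ofPi_mulSingle (i : ZMod 3) : ofPi (Pi.mulSingle i (.ofAdd 1)) = of (.a i) :=
  (MonoidHom.noncommPiCoprod_mulSingle _ i _).trans (zpow_one (of (.a i) : DSGroup))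

theorem ofPi_comp_toPi : ofPi.comp toPi = .id DSGroup := by
  have ha (i : ZMod 3) : ofPi (toPi (of (.a i))) = of (.a i) := by
    rw [toPi_of_a, ofPi_mulSingle]
  refine PresentedGroup.ext fun x => ?_
  rw [MonoidHom.comp_apply, MonoidHom.id_apply]
  cases x with
  | a i => exact ha i
  | b i => rw [of_b, map_mul, map_inv, map_mul, map_inv, ha, ha]
  | c i => rw [of_c, map_inv, map_inv, ha]
  | d i => rw [of_d, map_mul, map_inv, map_mul, map_inv, ha, ha]

theorem toPi_comp_ofPi : toPi.comp ofPi = .id _ := by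
  ext i : 2
  simp only [MonoidHom.comp_apply, MonoidHom.id_apply, MonoidHom.mulSingle_apply, ofPi_mulSingle,
    toPi_of_a]

noncomputable def mulEquivPi : DSGroup ≃* (ZMod 3 → Multiplicative ℤ) :=
  toPi.toMulEquiv ofPi ofPi_comp_toPi toPi_comp_ofPi

end DSGroup

/-- The associated group of the Dynnikov semigroup is free abelian of rank 3:
there is an isomorphism onto `ℤ³` sending `ã_0, ã_1, ã_2` to the standard free basis,
and in the group one has `b̃_i = ã_{i-1} ã_{i+1}⁻¹`, `c̃_i = ã_i⁻¹`,
`d̃_i = ã_{i+1} ã_{i-1}⁻¹`. -/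
theorem dsGroup_free_abelian_rank_three :
    ∃ e : DSGroup ≃* Multiplicative (ZMod 3 → ℤ),
      (∀ i : ZMod 3,
        e (PresentedGroup.of (Letter.a i)) = Multiplicative.ofAdd (Pi.single i 1)) ∧
      (∀ i : ZMod 3,
        (PresentedGroup.of (Letter.b i) : DSGroup) =
          PresentedGroup.of (Letter.a (i - 1)) * (PresentedGroup.of (Letter.a (i + 1)))⁻¹) ∧
      (∀ i : ZMod 3,
        (PresentedGroup.of (Letter.c i) : DSGroup) =
          (PresentedGroup.of (Letter.a i))⁻¹) ∧
      (∀ i : ZMod 3,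
        (PresentedGroup.of (Letter.d i) : DSGroup) =
          PresentedGroup.of (Letter.a (i + 1)) * (PresentedGroup.of (Letter.a (i - 1)))⁻¹) := by
  refine ⟨DSGroup.mulEquivPi.trans (MulEquiv.funMultiplicative (ZMod 3) ℤ).symm, fun i => ?_,
    DSGroup.of_b, DSGroup.of_c, DSGroup.of_d⟩
  rw [MulEquiv.trans_apply, MulEquiv.symm_apply_eq]
  exact DSGroup.toPi_of_a i
end

section
/- The group presented by generators u_0, u_1, u_2, u_3, r, s, t, v_1, v_2, v_3 with relations u_0 r = u_0 v_1 = s v_1 = u_1 s v_2 = u_2 s v_3 = u_3 v_3 = u_3 t^{-1} v_2 = u_2 t^{-1} v_1 = u_1 t^{-1} = 1 is isomorphic to the trefoil knot group ⟨s, t | s t s = t s t⟩. -/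
/-- The ten generators of the Neuwirth presentation for the trefoil. -/
inductive Gen : Type
  | u0 | u1 | u2 | u3 | r | s | t | v1 | v2 | v3

open FreeGroup in
/-- The nine Neuwirth relators. -/
def neuwirthRels : Set (FreeGroup Gen) :=
  { of Gen.u0 * of Gen.r,
    of Gen.u0 * of Gen.v1,
    of Gen.s * of Gen.v1,
    of Gen.u1 * of Gen.s * of Gen.v2,
    of Gen.u2 * of Gen.s * of Gen.v3,
    of Gen.u3 * of Gen.v3,
    of Gen.u3 * (of Gen.t)⁻¹ * of Gen.v2,
    of Gen.u2 * (of Gen.t)⁻¹ * of Gen.v1,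
    of Gen.u1 * (of Gen.t)⁻¹ }

/-- The two generators of the standard trefoil presentation. -/
inductive Gen2 : Type
  | s | t

open FreeGroup in
/-- The braid relator `s t s (t s t)⁻¹`. -/
def trefoilRels : Set (FreeGroup Gen2) :=
  { of Gen2.s * of Gen2.t * of Gen2.s * (of Gen2.t * of Gen2.s * of Gen2.t)⁻¹ }

namespace NeuwirthAux

lemma rel_one {α : Type*} {rels : Set (FreeGroup α)} {r : FreeGroup α} (h : r ∈ rels) :
    PresentedGroup.mk rels r = 1 :=
  (QuotientGroup.eq_one_iff r).2 (Subgroup.subset_normalClosure h)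

local notation "N" => PresentedGroup neuwirthRels
local notation "Tr" => PresentedGroup trefoilRels

open PresentedGroup

-- the nine relations in the Neuwirth group
lemma r1 : (of Gen.u0 : N) * of Gen.r = 1 := rel_one (by simp [neuwirthRels])
lemma r2 : (of Gen.u0 : N) * of Gen.v1 = 1 := rel_one (by simp [neuwirthRels])
lemma r3 : (of Gen.s : N) * of Gen.v1 = 1 := rel_one (by simp [neuwirthRels])
lemma r4 : (of Gen.u1 : N) * of Gen.s * of Gen.v2 = 1 := rel_one (by simp [neuwirthRels])
lemma r5 : (of Gen.u2 : N) * of Gen.s * of Gen.v3 = 1 := rel_one (by simp [neuwirthRels])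
lemma r6 : (of Gen.u3 : N) * of Gen.v3 = 1 := rel_one (by simp [neuwirthRels])
lemma r7 : (of Gen.u3 : N) * (of Gen.t)⁻¹ * of Gen.v2 = 1 := rel_one (by simp [neuwirthRels])
lemma r8 : (of Gen.u2 : N) * (of Gen.t)⁻¹ * of Gen.v1 = 1 := rel_one (by simp [neuwirthRels])
lemma r9 : (of Gen.u1 : N) * (of Gen.t)⁻¹ = 1 := rel_one (by simp [neuwirthRels])

-- derived identities
lemma hv1 : (of Gen.v1 : N) = (of Gen.s)⁻¹ := eq_inv_of_mul_eq_one_right r3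
lemma hu0 : (of Gen.u0 : N) = of Gen.s := by
  have := eq_inv_of_mul_eq_one_left r2; rw [this, hv1, inv_inv]
lemma hr : (of Gen.r : N) = (of Gen.s)⁻¹ := by
  have := eq_inv_of_mul_eq_one_right r1; rw [this, hu0]
lemma hu1 : (of Gen.u1 : N) = of Gen.t := by
  have := eq_inv_of_mul_eq_one_left r9; rw [this, inv_inv]
lemma hv2 : (of Gen.v2 : N) = (of Gen.s)⁻¹ * (of Gen.t)⁻¹ := by
  have := eq_inv_of_mul_eq_one_right r4; rw [this, hu1, mul_inv_rev]
lemma hu2 : (of Gen.u2 : N) = of Gen.s * of Gen.t := by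
  have h := r8; rw [hv1] at h
  rw [← mul_inv_eq_one, ← h]; group
lemma hu3 : (of Gen.u3 : N) = of Gen.t * of Gen.s * of Gen.t := by
  have h := r7; rw [hv2] at h
  rw [← mul_inv_eq_one, ← h]; group
lemma hv3 : (of Gen.v3 : N) = (of Gen.t * of Gen.s * of Gen.t)⁻¹ := by
  have := eq_inv_of_mul_eq_one_right r6; rw [this, hu3]
lemma braidN : (of Gen.s : N) * of Gen.t * of Gen.s = of Gen.t * of Gen.s * of Gen.t := by
  have h := r5
  rw [hu2, hv3] at h
  have := mul_eq_one_iff_eq_inv.mp h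
  simpa using this

lemma braidTr :
    (of Gen2.s : Tr) * of Gen2.t * of Gen2.s = of Gen2.t * of Gen2.s * of Gen2.t := by
  have h : (of Gen2.s : Tr) * of Gen2.t * of Gen2.s *
      (of Gen2.t * of Gen2.s * of Gen2.t)⁻¹ = 1 := rel_one (by simp [trefoilRels])
  have := mul_eq_one_iff_eq_inv.mp h
  simpa using this

/-- the map on generators Neuwirth → trefoil -/
def f1 : Gen → Tr
  | Gen.u0 => of Gen2.s
  | Gen.u1 => of Gen2.t
  | Gen.u2 => of Gen2.s * of Gen2.t
  | Gen.u3 => of Gen2.t * of Gen2.s * of Gen2.t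
  | Gen.r => (of Gen2.s)⁻¹
  | Gen.s => of Gen2.s
  | Gen.t => of Gen2.t
  | Gen.v1 => (of Gen2.s)⁻¹
  | Gen.v2 => (of Gen2.s)⁻¹ * (of Gen2.t)⁻¹
  | Gen.v3 => (of Gen2.t * of Gen2.s * of Gen2.t)⁻¹

/-- the map on generators trefoil → Neuwirth -/
def f2 : Gen2 → N
  | Gen2.s => of Gen.s
  | Gen2.t => of Gen.t

lemma h1 : ∀ r ∈ neuwirthRels, FreeGroup.lift f1 r = 1 := by
  intro r hr
  simp only [neuwirthRels, Set.mem_insert_iff, Set.mem_singleton_iff] at hr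
  rcases hr with h|h|h|h|h|h|h|h|h <;> subst h <;> simp [f1, braidTr] <;> group

lemma h2 : ∀ r ∈ trefoilRels, FreeGroup.lift f2 r = 1 := by
  intro r hr
  simp only [trefoilRels, Set.mem_singleton_iff] at hr
  subst hr
  simp [f2, braidN]

def φ : N →* Tr := toGroup h1
def ψ : Tr →* N := toGroup h2

theorem main : Nonempty (PresentedGroup neuwirthRels ≃* PresentedGroup trefoilRels) := by
  refine ⟨MonoidHom.toMulEquiv φ ψ ?_ ?_⟩
  · ext x
    cases x <;>
      simp [φ, ψ, f1, f2, toGroup.of, map_mul, map_inv, hu0, hu1, hu2, hu3, hr, hv1, hv2, hv3]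
  · ext x
    cases x <;> simp [φ, ψ, f1, f2, toGroup.of]

end NeuwirthAux

/-- The group given by the Neuwirth presentation is isomorphic to the trefoil knot
group `⟨s, t | s t s = t s t⟩`. -/
theorem neuwirth_iso_trefoil :
    Nonempty (PresentedGroup neuwirthRels ≃* PresentedGroup trefoilRels) :=
  NeuwirthAux.main
end

section
/- Let w be any word in the free monoid on {L, R} (brackets), with |w|_L = |w|_R (equal counts of L and R). Define the depth of a position as (number of L's) − (number of R's) in the prefix ending there, and suppose w is balanced. Then, modulo inserting factors of the form R^m L^m and deleting factors of the form L R at positions where they are adjacent, w is equivalent to a concatenation of blocks L^k R^k (k ≥ 0), and the maximal prefix depth is preserved. -/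
/-- Bracket words over `{L, R}`: `true` is `L` (left bracket), `false` is `R`. -/
abbrev BrWord : Type := List Bool

/-- The balance of a bracket word: `#L − #R`. -/
def bal (w : BrWord) : ℤ := (w.count true : ℤ) - (w.count false : ℤ)

/-- The depth of a word: the maximal value of `#L − #R` over all prefixes. -/
def depth (w : BrWord) : ℤ :=
  ((List.range (w.length + 1)).map fun n => bal (w.take n)).foldr max 0

/-- `w` is balanced: every prefix has at least as many `L`'s as `R`'s,
and the total counts are equal. -/
def IsBalancedWord (w : BrWord) : Prop :=
  (∀ p : BrWord, p <+: w → p.count false ≤ p.count true) ∧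
    w.count true = w.count false

/-- Elementary moves: inserting a factor `R^m L^m`, and deleting an adjacent
factor `L R`. -/
inductive Step : BrWord → BrWord → Prop
  | ins (x y : BrWord) (m : ℕ) :
      Step (x ++ y) (x ++ List.replicate m false ++ List.replicate m true ++ y)
  | del (x y : BrWord) : Step (x ++ [true, false] ++ y) (x ++ y)

/-- `w` is a concatenation of stars, i.e. of blocks `L^k R^k`. -/
def StarDecomposable (w : BrWord) : Prop :=
  ∃ ks : List ℕ,
    w = (ks.map fun k => List.replicate k true ++ List.replicate k false).flatten

section StarAux

private lemma prefix_split {p a b : List Bool} (h : p <+: a ++ b) :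
    p <+: a ∨ ∃ t, t <+: b ∧ p = a ++ t := by
  rcases le_or_gt p.length a.length with hle | hlt
  · exact Or.inl (List.prefix_of_prefix_length_le h (List.prefix_append a b) hle)
  · right
    have ha : a <+: p :=
      List.prefix_of_prefix_length_le (List.prefix_append a b) h (le_of_lt hlt)
    obtain ⟨t, rfl⟩ := ha
    exact ⟨t, ((List.prefix_append_right_inj a).mp h), rfl⟩

private lemma dyck_split (u : BrWord) (hu : IsBalancedWord u) (hne : u ≠ []) :
    ∃ a b, u = a ++ [true, false] ++ b ∧ IsBalancedWord (a ++ b) ∧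
      (a ++ b).length + 2 = u.length := by
  classical
  obtain ⟨k, r', hu1⟩ : ∃ k rest, u = List.replicate k true ++ false :: rest := by
    have hsplit : u = u.takeWhile (fun b => b) ++ u.dropWhile (fun b => b) :=
      (List.takeWhile_append_dropWhile ..).symm
    have hrep : u.takeWhile (fun b => b)
        = List.replicate (u.takeWhile (fun b => b)).length true := by
      apply List.eq_replicate_length.mpr
      intro x hx
      exact List.mem_takeWhile_imp hx
    rcases hdw : u.dropWhile (fun b => b) with _ | ⟨c, r'⟩
    · exfalso
      have hu' : u = List.replicate (u.takeWhile (fun b => b)).length true := by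
        conv_lhs => rw [hsplit]
        rw [hdw, List.append_nil, ← hrep]
      have hlen0 : u.length = (List.takeWhile (fun b => b) u).length := by
        rw [hu']; simp
      have hcf : u.count false = 0 := by rw [hu']; simp [List.count_replicate]
      have hct : u.count true = (List.takeWhile (fun b => b) u).length := by
        rw [hu']; simp [List.count_replicate]
      have hc := hu.2
      have : u.length = 0 := by omega
      exact hne (List.eq_nil_of_length_eq_zero this)
    · have hne' : u.dropWhile (fun b => b) ≠ [] := by rw [hdw]; simp
      have h1 := List.head_dropWhile_not (fun b => b) hne'
      have h2 : (u.dropWhile (fun b => b)).head? = some c := by rw [hdw]; rfl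
      rw [List.head?_eq_head hne', h1] at h2
      have hcfalse : c = false := (Option.some.inj h2).symm
      subst hcfalse
      refine ⟨(u.takeWhile (fun b => b)).length, r', ?_⟩
      conv_lhs => rw [hsplit]
      rw [hdw, ← hrep]
  have hk1 : 1 ≤ k := by
    by_contra h
    have hk0 : k = 0 := by omega
    have hpre : [false] <+: u := by
      rw [hu1, hk0]
      exact ⟨r', by simp⟩
    have := hu.1 _ hpre
    simp at this
  refine ⟨List.replicate (k - 1) true, r', ?_, ?_, ?_⟩
  · rw [hu1]
    have : List.replicate k true = List.replicate (k - 1) true ++ [true] := by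
      conv_lhs => rw [show k = (k - 1) + 1 by omega]
      exact List.replicate_succ' ..
    rw [this]
    simp
  · constructor
    · intro q hq
      rcases prefix_split hq with hq | ⟨t, ht, rfl⟩
      · have : q.count false = 0 := by
          rw [List.count_eq_zero]
          intro hmem
          have := List.eq_of_mem_replicate (hq.subset hmem)
          simp at this
        omega
      · have hpre : List.replicate k true ++ false :: t <+: u := by
          rw [hu1]
          exact (List.prefix_append_right_inj _).mpr
            (List.cons_prefix_cons.mpr ⟨rfl, ht⟩)
        have h1 := hu.1 _ hpre
        simp [List.count_append, List.count_replicate, List.count_cons] at h1 ⊢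
        omega
    · have h2 := hu.2
      rw [hu1] at h2
      simp [List.count_append, List.count_replicate, List.count_cons] at h2 ⊢
      omega
  · rw [hu1]
    simp
    omega

private lemma dyck_reduce_aux :
    ∀ (n : ℕ) (u : BrWord), u.length ≤ n → IsBalancedWord u →
      ∀ x y : BrWord, Relation.ReflTransGen Step (x ++ u ++ y) (x ++ y) := by
  intro n
  induction n with
  | zero =>
    intro u hlen _ x y
    have : u = [] := List.eq_nil_of_length_eq_zero (by omega)
    subst this
    simpa using Relation.ReflTransGen.refl
  | succ n ih =>
    intro u hlen hu x y
    by_cases h : u = []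
    · subst h; simpa using Relation.ReflTransGen.refl
    · obtain ⟨a, b, hab, hbal, hlab⟩ := dyck_split u hu h
      have hstep : Step (x ++ u ++ y) (x ++ (a ++ b) ++ y) := by
        have := Step.del (x ++ a) (b ++ y)
        have e1 : x ++ a ++ [true, false] ++ (b ++ y) = x ++ u ++ y := by
          rw [hab]; simp
        have e2 : x ++ a ++ (b ++ y) = x ++ (a ++ b) ++ y := by simp
        rwa [e1, e2] at this
      exact Relation.ReflTransGen.head hstep (ih (a ++ b) (by omega) hbal x y)

private lemma dyck_reduce (u : BrWord) (hu : IsBalancedWord u) (x y : BrWord) :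
    Relation.ReflTransGen Step (x ++ u ++ y) (x ++ y) :=
  dyck_reduce_aux u.length u le_rfl hu x y

private lemma le_foldr_max {a : ℤ} : ∀ {l : List ℤ}, a ∈ l → a ≤ l.foldr max 0 := by
  intro l
  induction l with
  | nil => simp
  | cons c l ih =>
    intro h
    rcases List.mem_cons.mp h with rfl | h
    · exact le_max_left _ _
    · exact le_trans (ih h) (le_max_right _ _)

private lemma foldr_max_le {c : ℤ} (hc : 0 ≤ c) :
    ∀ {l : List ℤ}, (∀ a ∈ l, a ≤ c) → l.foldr max 0 ≤ c := by
  intro l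
  induction l with
  | nil => simpa
  | cons b l ih =>
    intro h
    simp only [List.foldr_cons]
    exact max_le (h b (by simp)) (ih fun a ha => h a (by simp [ha]))

private lemma bal_take_le_depth (w : BrWord) (n : ℕ) (hn : n ≤ w.length) :
    bal (w.take n) ≤ depth w :=
  le_foldr_max (List.mem_map.mpr ⟨n, List.mem_range.mpr (by omega), rfl⟩)

private lemma depth_nonneg (w : BrWord) : 0 ≤ depth w := by
  have := bal_take_le_depth w 0 (by omega)
  simpa [bal] using this

private lemma exists_prefix_bal (w : BrWord) :
    ∃ n ≤ w.length, bal (w.take n) = depth w := by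
  have key : ∀ l : List ℤ, l.foldr max 0 = 0 ∨ l.foldr max 0 ∈ l := by
    intro l
    induction l with
    | nil => simp
    | cons b l ih =>
      simp only [List.foldr_cons]
      rcases le_or_gt b (l.foldr max 0) with h | h
      · rw [max_eq_right h]
        rcases ih with h' | h'
        · exact Or.inl h'
        · exact Or.inr (List.mem_cons_of_mem _ h')
      · rw [max_eq_left (le_of_lt h)]
        exact Or.inr List.mem_cons_self
  rcases key (((List.range (w.length + 1)).map fun n => bal (w.take n))) with h | h
  · exact ⟨0, by omega, by simpa [bal, depth] using h.symm⟩
  · obtain ⟨n, hn, he⟩ := List.mem_map.mp h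
    exact ⟨n, by have := List.mem_range.mp hn; omega, he⟩

private lemma depth_star (d : ℕ) :
    depth (List.replicate d true ++ List.replicate d false) = (d : ℤ) := by
  have hlen : (List.replicate d true ++ List.replicate d false).length = 2 * d := by
    simp; omega
  have hbal : ∀ n : ℕ,
      bal ((List.replicate d true ++ List.replicate d false).take n)
        = ((min n d : ℕ) : ℤ) - ((min (n - d) d : ℕ) : ℤ) := by
    intro n
    rw [List.take_append, List.take_replicate, List.length_replicate,
      List.take_replicate]
    simp [bal, List.count_append, List.count_replicate]
  apply le_antisymm
  · apply foldr_max_le (by positivity)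
    intro a ha
    obtain ⟨n, hn, rfl⟩ := List.mem_map.mp ha
    rw [hbal n]
    have hn' := List.mem_range.mp hn
    rw [hlen] at hn'
    omega
  · have hmem : (d : ℤ) ≤ _ := le_foldr_max (l := ((List.range
        ((List.replicate d true ++ List.replicate d false).length + 1)).map
        fun n => bal ((List.replicate d true ++ List.replicate d false).take n)))
      (List.mem_map.mpr ⟨d, List.mem_range.mpr (by rw [hlen]; omega), by
        rw [hbal d]; omega⟩)
    exact hmem

end StarAux
/-- Every balanced word with equally many `L`'s and `R`'s is equivalent, modulo
inserting factors `R^m L^m` and deleting adjacent factors `L R`, to a concatenation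
of blocks `L^k R^k`, with the maximal prefix depth preserved. -/
theorem star_decomposition (w : BrWord)
    (hcount : w.count true = w.count false) (hbal : IsBalancedWord w) :
    ∃ w' : BrWord, Relation.ReflTransGen Step w w' ∧ StarDecomposable w' ∧
      depth w' = depth w := by
  classical
  obtain ⟨n, hn, hpd⟩ := exists_prefix_bal w
  set p := w.take n with hp
  set s := w.drop n with hs
  have hw : w = p ++ s := (List.take_append_drop n w).symm
  have hd0 : 0 ≤ depth w := depth_nonneg w
  set d : ℕ := (depth w).toNat with hdd
  have hdz : (d : ℤ) = depth w := Int.toNat_of_nonneg hd0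
  have hctp : p.count true = p.count false + d := by
    have : (p.count true : ℤ) - p.count false = (d : ℤ) := by
      rw [hdz]; exact hpd
    omega
  -- count facts for s
  have hcts : s.count false = s.count true + d := by
    have h1 : w.count true = p.count true + s.count true := by
      rw [hw, List.count_append]
    have h2 : w.count false = p.count false + s.count false := by
      rw [hw, List.count_append]
    omega
  -- balancedness of p ++ R^d
  have hbal1 : IsBalancedWord (p ++ List.replicate d false) := by
    constructor
    · intro q hq
      rcases prefix_split hq with hq | ⟨t, ht, rfl⟩
      · have hqw : q <+: w := hq.trans (by rw [hw]; exact List.prefix_append _ _)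
        exact hbal.1 _ hqw
      · have htrep : t = List.replicate t.length false := by
          apply List.eq_replicate_length.mpr
          intro x hx
          have := List.eq_of_mem_replicate (ht.subset hx)
          simpa using this
        have htlen : t.length ≤ d := by
          have := ht.length_le
          simpa using this
        have hqw : p <+: w := by rw [hw]; exact List.prefix_append _ _
        have hpcnt := hbal.1 _ hqw
        rw [htrep]
        simp [List.count_append, List.count_replicate]
        omega
    · simp [List.count_append, List.count_replicate]
      omega
  -- balancedness of L^d ++ s
  have hbal2 : IsBalancedWord (List.replicate d true ++ s) := by
    constructor
    · intro q hq
      rcases prefix_split hq with hq | ⟨t, ht, rfl⟩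
      · have : q.count false = 0 := by
          rw [List.count_eq_zero]
          intro hmem
          have := List.eq_of_mem_replicate (hq.subset hmem)
          simp at this
        omega
      · have hpre : p ++ t <+: w := by
          rw [hw]
          exact (List.prefix_append_right_inj p).mpr ht
        have h1 := hbal.1 _ hpre
        simp [List.count_append, List.count_replicate] at h1 ⊢
        omega
    · simp [List.count_append, List.count_replicate]
      omega
  refine ⟨List.replicate d true ++ List.replicate d false, ?_, ⟨[d], by simp⟩, by
    rw [depth_star]; exact hdz⟩
  -- step 1 : insert R^d L^d after p
  have step1 : Step w (p ++ List.replicate d false ++ List.replicate d true ++ s) := by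
    rw [hw]; exact Step.ins p s d
  -- step 2 : insert R^d L^d after p ++ R^d ++ L^d
  have step2 : Step (p ++ List.replicate d false ++ List.replicate d true ++ s)
      (p ++ List.replicate d false ++ List.replicate d true
        ++ List.replicate d false ++ List.replicate d true ++ s) := by
    have := Step.ins (p ++ List.replicate d false ++ List.replicate d true) s d
    have e1 : p ++ List.replicate d false ++ List.replicate d true ++ s
        = (p ++ List.replicate d false ++ List.replicate d true) ++ s := by simp
    have e2 : (p ++ List.replicate d false ++ List.replicate d true)
          ++ List.replicate d false ++ List.replicate d true ++ s
        = p ++ List.replicate d false ++ List.replicate d true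
          ++ List.replicate d false ++ List.replicate d true ++ s := by simp
    rwa [e1, e2]
  -- step 3 : delete the balanced block p ++ R^d at the front
  have step3 : Relation.ReflTransGen Step
      (p ++ List.replicate d false ++ List.replicate d true
        ++ List.replicate d false ++ List.replicate d true ++ s)
      (List.replicate d true ++ List.replicate d false
        ++ (List.replicate d true ++ s)) := by
    have := dyck_reduce (p ++ List.replicate d false) hbal1 []
      (List.replicate d true ++ List.replicate d false ++ (List.replicate d true ++ s))
    have e1 : [] ++ (p ++ List.replicate d false)
          ++ (List.replicate d true ++ List.replicate d false ++ (List.replicate d true ++ s))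
        = p ++ List.replicate d false ++ List.replicate d true
          ++ List.replicate d false ++ List.replicate d true ++ s := by simp
    have e2 : ([] : BrWord) ++ (List.replicate d true ++ List.replicate d false
          ++ (List.replicate d true ++ s))
        = List.replicate d true ++ List.replicate d false ++ (List.replicate d true ++ s) := by
      simp
    rwa [e1, e2] at this
  -- step 4 : delete the balanced block L^d ++ s at the end
  have step4 : Relation.ReflTransGen Step
      (List.replicate d true ++ List.replicate d false ++ (List.replicate d true ++ s))
      (List.replicate d true ++ List.replicate d false) := by
    have := dyck_reduce (List.replicate d true ++ s) hbal2
      (List.replicate d true ++ List.replicate d false) []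
    simpa using this
  exact Relation.ReflTransGen.head step1
    (Relation.ReflTransGen.head step2 (step3.trans step4))
end
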